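/- Fix κ > 1. Define Θ := {b ∈ (0,1) : there exist integers n ≠ m ≥ 0 with S_n(b) ≥ 0, S_m(b) ≥ 0 and {λ_n^+(b), λ_n^−(b)} ∩ {λ_m^+(b), λ_m^−(b)} ≠ ∅} and S := {b ∈ (0,1) : S_n(b) = 0 for some integer n ≥ 0}. Then the set Θ ∪ S is countable; more precisely, for each pair of integers n ≠ m ≥ 0 the set Θ_{n,m} := {b ∈ (0,1) : S_n(b) ≥ 0, S_m(b) ≥ 0, {λ_n^+(b), λ_n^−(b)} ∩ {λ_m^+(b), λ_m^−(b)} ≠ ∅} is finite, and for each n ≥ 0 the set {b ∈ (0,1) : S_n(b) = 0} is finite. -/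

import Mathlib

open Set

noncomputable section

/-- `S_n(b) = (κb²/2 − (nκ−1)/(2(n+1)))² − κ b^{2n+2}/(n+1)²`. -/
def Sn (κ : ℝ) (n : ℕ) (b : ℝ) : ℝ :=
  (κ * b ^ 2 / 2 - ((n : ℝ) * κ - 1) / (2 * ((n : ℝ) + 1))) ^ 2 -
    κ * b ^ (2 * n + 2) / ((n : ℝ) + 1) ^ 2

/-- `λ_n^+(b) = κb²/2 + (nκ+1)/(2(n+1)) + √(S_n(b))`. -/
def lamP (κ : ℝ) (n : ℕ) (b : ℝ) : ℝ :=
  κ * b ^ 2 / 2 + ((n : ℝ) * κ + 1) / (2 * ((n : ℝ) + 1)) + Real.sqrt (Sn κ n b)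

/-- `λ_n^−(b) = κb²/2 + (nκ+1)/(2(n+1)) − √(S_n(b))`. -/
def lamM (κ : ℝ) (n : ℕ) (b : ℝ) : ℝ :=
  κ * b ^ 2 / 2 + ((n : ℝ) * κ + 1) / (2 * ((n : ℝ) + 1)) - Real.sqrt (Sn κ n b)

/-- The eigenvalue-collision set `Θ_{n,m}`. -/
def ThetaNM (κ : ℝ) (n m : ℕ) : Set ℝ :=
  {b | b ∈ Ioo (0 : ℝ) 1 ∧ 0 ≤ Sn κ n b ∧ 0 ≤ Sn κ m b ∧
    (({lamP κ n b, lamM κ n b} : Set ℝ) ∩ {lamP κ m b, lamM κ m b}).Nonempty}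

/-- The full collision set `Θ`. -/
def ThetaSet (κ : ℝ) : Set ℝ :=
  {b | b ∈ Ioo (0 : ℝ) 1 ∧ ∃ n m : ℕ, n ≠ m ∧ 0 ≤ Sn κ n b ∧ 0 ≤ Sn κ m b ∧
    (({lamP κ n b, lamM κ n b} : Set ℝ) ∩ {lamP κ m b, lamM κ m b}).Nonempty}

/-- The degeneracy set `S`. -/
def DegenSet (κ : ℝ) : Set ℝ := {b | b ∈ Ioo (0 : ℝ) 1 ∧ ∃ n : ℕ, Sn κ n b = 0}

/-! ### Auxiliary definitions and lemmas -/

open Polynomial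

/-- The constant `c_n = (nκ−1)/(2(n+1))`. -/
def cC (κ : ℝ) (n : ℕ) : ℝ := ((n : ℝ) * κ - 1) / (2 * ((n : ℝ) + 1))

/-- The constant `A_n = (nκ+1)/(2(n+1))`. -/
def aA (κ : ℝ) (n : ℕ) : ℝ := ((n : ℝ) * κ + 1) / (2 * ((n : ℝ) + 1))

/-- The difference `d = A_n − A_m`. -/
def dd (κ : ℝ) (n m : ℕ) : ℝ := aA κ n - aA κ m

/-- `S_n` as a polynomial. -/
def SnP (κ : ℝ) (n : ℕ) : Polynomial ℝ :=
  (C (κ/2) * X^2 - C (cC κ n))^2 - C (κ/((n:ℝ)+1)^2) * X^(2*n+2)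

lemma SnP_eval (κ : ℝ) (n : ℕ) (b : ℝ) : (SnP κ n).eval b = Sn κ n b := by
  simp [SnP, Sn, cC]; ring

/-- The resolvent polynomial whose roots contain all eigenvalue collisions. -/
def QP (κ : ℝ) (n m : ℕ) : Polynomial ℝ :=
  (SnP κ m - SnP κ n + C ((dd κ n m)^2))^2 - C (4*(dd κ n m)^2) * SnP κ m

lemma QP_eval (κ : ℝ) (n m : ℕ) (b : ℝ) : (QP κ n m).eval b =
    (Sn κ m b - Sn κ n b + (dd κ n m)^2)^2 - 4*(dd κ n m)^2 * Sn κ m b := by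
  simp [QP, SnP_eval]

lemma theta_subset_roots (κ : ℝ) (n m : ℕ) :
    ThetaNM κ n m ⊆ {b | (QP κ n m).IsRoot b} := by
  rintro b ⟨-, hSn, hSm, x, hx1, hx2⟩
  have h2n : Real.sqrt (Sn κ n b) ^ 2 = Sn κ n b := Real.sq_sqrt hSn
  have h2m : Real.sqrt (Sn κ m b) ^ 2 = Sn κ m b := Real.sq_sqrt hSm
  set sn := Real.sqrt (Sn κ n b) with hsn
  set sm := Real.sqrt (Sn κ m b) with hsm
  simp only [Set.mem_insert_iff, Set.mem_singleton_iff] at hx1 hx2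
  have key : sn = sm - dd κ n m ∨ sn = -(sm - dd κ n m) ∨
      sn = sm + dd κ n m ∨ sn = -(sm + dd κ n m) := by
    rcases hx1 with h1 | h1 <;> rcases hx2 with h2 | h2 <;>
      rw [h1] at h2 <;>
      simp only [lamP, lamM, dd, aA, ← hsn, ← hsm] at h2
    · left; simp only [dd, aA]; linarith
    · right; right; right; simp only [dd, aA]; linarith
    · right; left; simp only [dd, aA]; linarith
    · right; right; left; simp only [dd, aA]; linarith
  show (QP κ n m).eval b = 0
  rw [QP_eval, ← h2n, ← h2m]
  rcases key with h | h | h | h <;> rw [h] <;> ring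

lemma cC_bounds (κ : ℝ) (hκ : 1 < κ) (n : ℕ) : -(κ/2) ≤ cC κ n ∧ cC κ n ≤ κ/2 := by
  have hn : (0:ℝ) ≤ (n:ℝ) := Nat.cast_nonneg n
  have hden : (0:ℝ) < 2 * ((n:ℝ) + 1) := by linarith
  constructor
  · rw [cC, le_div_iff₀ hden]; nlinarith
  · rw [cC, div_le_iff₀ hden]; nlinarith

lemma dd_sq_le (κ : ℝ) (hκ : 1 < κ) (n m : ℕ) : (dd κ n m)^2 ≤ κ^2/4 := by
  have key : ∀ k : ℕ, 0 < aA κ k ∧ aA κ k ≤ κ/2 := by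
    intro k
    have hk : (0:ℝ) ≤ (k:ℝ) := Nat.cast_nonneg k
    have hden : (0:ℝ) < 2 * ((k:ℝ) + 1) := by linarith
    constructor
    · apply div_pos (by nlinarith) hden
    · rw [aA, div_le_iff₀ hden]; nlinarith
  obtain ⟨h1, h2⟩ := key n
  obtain ⟨h3, h4⟩ := key m
  rw [dd]; nlinarith

lemma final_core (A B κ u : ℝ) (hκ0 : 0 < κ) (hu1 : 1 ≤ u)
    (hA : A ≤ -(2*κ^2*u)) (hB : B ≤ κ^4*u^2) : 0 < A^2 - B := by
  have hku : (0:ℝ) < κ^2*u := by positivity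
  have h1 : (0:ℝ) ≤ -A - 2*κ^2*u := by linarith
  have h2 : (0:ℝ) ≤ -A + 2*κ^2*u := by linarith
  have hpos : (0:ℝ) < κ^4*u^2 := by positivity
  nlinarith [mul_nonneg h1 h2]

lemma arith_core (κ t u P cn cm d en : ℝ) (hκ : 1 < κ) (ht1 : 1 ≤ t) (htu : t ≤ u)
    (hP : P ≤ u) (hP0 : 0 ≤ P) (hen : 1 ≤ en)
    (hcn1 : -(κ/2) ≤ cn) (hcn2 : cn ≤ κ/2) (hcm1 : -(κ/2) ≤ cm) (hcm2 : cm ≤ κ/2)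
    (hd : d^2 ≤ κ^2/4) :
    0 < (((κ*t/2 - cm)^2 - 6*κ^2*u) - ((κ*t/2 - cn)^2 - κ*P/en) + d^2)^2
      - 4*d^2*((κ*t/2 - cm)^2 - 6*κ^2*u) := by
  have hκ0 : (0:ℝ) < κ := by linarith
  have hu1 : (1:ℝ) ≤ u := by linarith
  have hu0 : (0:ℝ) ≤ u := by linarith
  have ht0 : (0:ℝ) ≤ t := by linarith
  have hq0 : 0 ≤ κ*P/en := div_nonneg (by nlinarith) (by linarith)
  have hkk : (0:ℝ) ≤ κ*u*(κ-1) :=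
    mul_nonneg (mul_nonneg (by linarith) (by linarith)) (by linarith)
  have hq1 : κ*P/en ≤ κ^2*u := by
    calc κ*P/en ≤ κ*P := div_le_self (by nlinarith) hen
    _ ≤ κ*u := mul_le_mul_of_nonneg_left hP hκ0.le
    _ ≤ κ^2*u := by nlinarith [hkk]
  have e1 : κ*t*(cn - cm) ≤ κ^2 * u := by
    have hkt : (0:ℝ) ≤ κ * t := by positivity
    calc κ*t*(cn - cm) ≤ κ*t*κ := mul_le_mul_of_nonneg_left (by linarith) hkt
    _ = κ^2 * t := by ring
    _ ≤ κ^2*u := mul_le_mul_of_nonneg_left htu (sq_nonneg κ)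
  have hcm2' : cm^2 ≤ κ^2/4 := by nlinarith
  have huk : κ^2/2 ≤ κ^2 * u := by
    nlinarith [mul_nonneg (sq_nonneg κ) (by linarith : (0:ℝ) ≤ u - 1), sq_nonneg κ]
  have expand : (κ*t/2 - cm)^2 - (κ*t/2 - cn)^2
      = κ*t*(cn - cm) + (cm^2 - cn^2) := by ring
  have hdelta : ((κ*t/2 - cm)^2 - 6*κ^2*u) - ((κ*t/2 - cn)^2 - κ*P/en) + d^2
      ≤ -(2*κ^2*u) := by
    linarith [expand, e1, hcm2', hq1, hd, huk, sq_nonneg cn]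
  have hSmUB : (κ*t/2 - cm)^2 - 6*κ^2*u ≤ κ^2 * t^2 := by
    have hkt1 : κ*1 ≤ κ*t := mul_le_mul_of_nonneg_left ht1 hκ0.le
    have h1 : (0:ℝ) ≤ κ*t/2 + cm := by linarith
    have h2 : (0:ℝ) ≤ 3*(κ*t)/2 - cm := by linarith
    have h3 : (κ*t/2 - cm)^2 ≤ κ^2*t^2 := by nlinarith [mul_nonneg h1 h2]
    have h4 : (0:ℝ) ≤ 6*κ^2*u := by positivity
    linarith
  have hd0 : (0:ℝ) ≤ 4*d^2 := by positivity
  have hfin : 4*d^2 * ((κ*t/2 - cm)^2 - 6*κ^2*u) ≤ κ^4 * u^2 := by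
    calc 4*d^2 * ((κ*t/2 - cm)^2 - 6*κ^2*u) ≤ 4*d^2 * (κ^2 * t^2) :=
          mul_le_mul_of_nonneg_left hSmUB hd0
    _ ≤ κ^2 * (κ^2 * t^2) := mul_le_mul_of_nonneg_right (by linarith) (by positivity)
    _ = κ^4 * t^2 := by ring
    _ ≤ κ^4 * u^2 := mul_le_mul_of_nonneg_left (pow_le_pow_left₀ ht0 htu 2) (by positivity)
  exact final_core _ _ κ u hκ0 hu1 hdelta hfin

lemma QP_ne_zero (κ : ℝ) (hκ : 1 < κ) {n m : ℕ} (hnm : n < m) : QP κ n m ≠ 0 := by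
  have hκ0 : (0:ℝ) < κ := by linarith
  have hm1 : (1:ℝ) ≤ (m:ℝ) := by exact_mod_cast Nat.one_le_iff_ne_zero.mpr (by omega)
  obtain ⟨t, ht⟩ : ∃ t : ℝ, t = 6 * κ * ((m:ℝ)+1)^2 := ⟨_, rfl⟩
  have ht1 : (1:ℝ) ≤ t := by rw [ht]; nlinarith
  have ht0 : (0:ℝ) ≤ t := by linarith
  intro h
  have hb2 : (Real.sqrt t)^2 = t := Real.sq_sqrt ht0
  have hev0 : (QP κ n m).eval (Real.sqrt t) = 0 := by rw [h]; simp
  rw [QP_eval] at hev0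
  have hSnval : ∀ k : ℕ, Sn κ k (Real.sqrt t)
      = (κ*t/2 - cC κ k)^2 - κ * t^(k+1) / ((k:ℝ)+1)^2 := by
    intro k
    have h2 : 2*k+2 = 2*(k+1) := by ring
    rw [Sn, h2, pow_mul, hb2, cC]
  rw [hSnval m, hSnval n] at hev0
  have h6 : κ * t^(m+1) / ((m:ℝ)+1)^2 = 6*κ^2*t^m := by
    have hm2 : ((m:ℝ)+1)^2 ≠ 0 := by positivity
    rw [pow_succ, ht]
    field_simp
  rw [h6] at hev0
  have htu : t ≤ t^m := by
    calc t = t^1 := (pow_one t).symm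
    _ ≤ t^m := pow_le_pow_right₀ ht1 (by omega)
  have hP : t^(n+1) ≤ t^m := pow_le_pow_right₀ ht1 (by omega)
  have hP0 : (0:ℝ) ≤ t^(n+1) := pow_nonneg ht0 _
  have hen : (1:ℝ) ≤ ((n:ℝ)+1)^2 := by
    have : (0:ℝ) ≤ (n:ℝ) := Nat.cast_nonneg n
    nlinarith
  obtain ⟨hcn1, hcn2⟩ := cC_bounds κ hκ n
  obtain ⟨hcm1, hcm2⟩ := cC_bounds κ hκ m
  exact (arith_core κ t (t^m) (t^(n+1)) (cC κ n) (cC κ m) (dd κ n m) (((n:ℝ)+1)^2)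
    hκ ht1 htu hP hP0 hen hcn1 hcn2 hcm1 hcm2 (dd_sq_le κ hκ n m)).ne' hev0

lemma SnP_ne_zero (κ : ℝ) (hκ : 1 < κ) (n : ℕ) : SnP κ n ≠ 0 := by
  intro h
  have h0 : (SnP κ n).eval 0 = 0 := by rw [h]; simp
  rw [SnP_eval] at h0
  have hval : Sn κ n 0 = (cC κ n)^2 := by
    rw [Sn, zero_pow (by omega : 2*n+2 ≠ 0), cC]; ring
  rw [hval] at h0
  have hc : cC κ n ≠ 0 := by
    cases n with
    | zero => norm_num [cC]
    | succ k =>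
      have hk : (1:ℝ) ≤ ((k:ℝ)+1) := by
        have : (0:ℝ) ≤ (k:ℝ) := Nat.cast_nonneg k
        linarith
      have : 0 < cC κ (k+1) := by
        rw [cC]
        apply div_pos _ (by push_cast; positivity)
        push_cast
        nlinarith
      exact this.ne'
  exact hc (by nlinarith [sq_nonneg (cC κ n), h0])

/-- For `κ > 1`: each `Θ_{n,m}` (`n ≠ m`) is finite, each zero set `{b ∈ (0,1) : S_n(b) = 0}`
is finite, and hence `Θ ∪ S` is countable. -/
theorem collision_and_degeneracy_sets_are_countable (κ : ℝ) (hκ : 1 < κ) :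
    (∀ n m : ℕ, n ≠ m → (ThetaNM κ n m).Finite) ∧
    (∀ n : ℕ, {b | b ∈ Ioo (0 : ℝ) 1 ∧ Sn κ n b = 0}.Finite) ∧
    (ThetaSet κ ∪ DegenSet κ).Countable := by
  have key : ∀ n m : ℕ, n < m → (ThetaNM κ n m).Finite := fun n m h =>
    (Polynomial.finite_setOf_isRoot (QP_ne_zero κ hκ h)).subset (theta_subset_roots κ n m)
  have part1 : ∀ n m : ℕ, n ≠ m → (ThetaNM κ n m).Finite := by
    intro n m hnm
    rcases hnm.lt_or_gt with h | h
    · exact key n m h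
    · refine (key m n h).subset ?_
      rintro b ⟨hb, h1, h2, x, hx1, hx2⟩
      exact ⟨hb, h2, h1, x, hx2, hx1⟩
  have part2 : ∀ n : ℕ, {b | b ∈ Ioo (0:ℝ) 1 ∧ Sn κ n b = 0}.Finite := by
    intro n
    refine (Polynomial.finite_setOf_isRoot (SnP_ne_zero κ hκ n)).subset ?_
    rintro b ⟨-, hb⟩
    show (SnP κ n).eval b = 0
    rw [SnP_eval, hb]
  refine ⟨part1, part2, ?_⟩
  apply Set.Countable.union
  · have hsub : ThetaSet κ ⊆ ⋃ (n : ℕ) (m : ℕ) (_ : n ≠ m), ThetaNM κ n m := by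
      rintro b ⟨hb, n, m, hnm, h1, h2, hx⟩
      exact mem_iUnion.2 ⟨n, mem_iUnion.2 ⟨m, mem_iUnion.2 ⟨hnm, hb, h1, h2, hx⟩⟩⟩
    exact Set.Countable.mono hsub (Set.countable_iUnion fun n =>
      Set.countable_iUnion fun m => Set.countable_iUnion fun h => (part1 n m h).countable)
  · have hsub : DegenSet κ ⊆ ⋃ n : ℕ, {b | b ∈ Ioo (0:ℝ) 1 ∧ Sn κ n b = 0} := by
      rintro b ⟨hb, n, hn⟩
      exact mem_iUnion.2 ⟨n, hb, hn⟩
    exact Set.Countable.mono hsub (Set.countable_iUnion fun n => (part2 n).countable)
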